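/- Case (V), construction: Let η be a character of Γ with η|_Λ = ξ. On the r-dimensional space with basis (f_i)_{i ∈ ℤ/rℤ}, define ρ(h)·f_i = η(h)·χ₁(h)^i·f_i, X·f_i = f_{i+1}, and Y·f_i = c_i·f_{i−1} (all indices modulo r; this is well defined since c_{i+r} = c_i for all i, and Y·f₀ = 0 since c₀ = 0). Then (L(η), ρ, X, Y) is a case-V representation, and it is irreducible. -/
import Mathlib


noncomputable section

/-- `(V, ρ, X, Y)` is a representation of the common part of the rank-2 algebra `A(ξ)`:
`ρ` is a group homomorphism (recorded via multiplicativity and unitality),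
`ρ(h)∘X = χ₁(h)·(X∘ρ(h))` and `ρ(h)∘Y = χ₂(h)·(Y∘ρ(h))` for all `h ∈ Γ`, and
`ρ(g) = ξ(g)·id` for all `g ∈ Λ`. -/
def IsRep {Γ : Type*} [CommGroup Γ] (χ₁ χ₂ : Γ →* ℂˣ) (Λ : Subgroup Γ) (ξ : ↥Λ →* ℂˣ)
    {V : Type*} [AddCommGroup V] [Module ℂ V]
    (ρ : Γ → Module.End ℂ V) (X Y : Module.End ℂ V) : Prop :=
  (∀ a b : Γ, ρ (a * b) = ρ a * ρ b) ∧ ρ 1 = 1 ∧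
  (∀ h : Γ, ρ h * X = (χ₁ h : ℂ) • (X * ρ h)) ∧
  (∀ h : Γ, ρ h * Y = (χ₂ h : ℂ) • (Y * ρ h)) ∧
  ∀ g : Λ, ρ (g : Γ) = (ξ g : ℂ) • (1 : Module.End ℂ V)

/-- A subspace `W` is stable under `X`, `Y` and all `ρ(h)`. -/
def Stable2 {Γ : Type*} {V : Type*} [AddCommGroup V] [Module ℂ V]
    (ρ : Γ → Module.End ℂ V) (X Y : Module.End ℂ V) (W : Submodule ℂ V) : Prop :=
  (∀ v ∈ W, X v ∈ W) ∧ (∀ v ∈ W, Y v ∈ W) ∧ ∀ h : Γ, ∀ v ∈ W, ρ h v ∈ W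

/-- Irreducibility: `V ≠ 0` and the only subspaces stable under `X`, `Y` and all `ρ(h)`
are `0` and `V`. -/
def Irred2 {Γ : Type*} {V : Type*} [AddCommGroup V] [Module ℂ V]
    (ρ : Γ → Module.End ℂ V) (X Y : Module.End ℂ V) : Prop :=
  (∃ v : V, v ≠ 0) ∧ ∀ W : Submodule ℂ V, Stable2 ρ X Y W → W = ⊥ ∨ W = ⊤

/-- The sequence `c_i` defined by `c₀ = c` and
`c_i = q·(c_{i−1} + ν − ν·q^{2(i−1)}·γ)` for `i ≥ 1`. -/
def cseq (q ν γ c : ℂ) : ℕ → ℂ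
  | 0 => c
  | i + 1 => q * (cseq q ν γ c i + ν - ν * q ^ (2 * i) * γ)

/-- `(V, ρ, X, Y)` is a case-V representation: a representation with in addition
`X^r = id`, `Y^r = 0` and `X∘Y = q⁻¹·(Y∘X) + ρ(g₁g₂) − id`, where `q = χ₁(g₁)`. -/
def IsRepV {Γ : Type*} [CommGroup Γ] (g₁ g₂ : Γ) (χ₁ χ₂ : Γ →* ℂˣ)
    (Λ : Subgroup Γ) (ξ : ↥Λ →* ℂˣ) (r : ℕ)
    {V : Type*} [AddCommGroup V] [Module ℂ V]
    (ρ : Γ → Module.End ℂ V) (X Y : Module.End ℂ V) : Prop :=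
  IsRep χ₁ χ₂ Λ ξ ρ X Y ∧ X ^ r = 1 ∧ Y ^ r = 0 ∧
    X * Y = (((χ₁ g₁ : ℂˣ) : ℂ))⁻¹ • (Y * X) + ρ (g₁ * g₂) - 1

/-- The action of `h ∈ Γ` on `L(η)`, with `ρ(h)·f_i = η(h)·χ₁(h)^i·f_i` on the basis
`(f_i)_{i ∈ ℤ/rℤ}` of `ℤ/rℤ → ℂ`. -/
def wRho (r : ℕ) {Γ : Type*} [CommGroup Γ] (χ₁ η : Γ →* ℂˣ) (h : Γ) :
    Module.End ℂ (ZMod r → ℂ) where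
  toFun v := fun i => (η h : ℂ) * (χ₁ h : ℂ) ^ i.val * v i
  map_add' v w := by funext i; simp [mul_add]
  map_smul' a v := by funext i; simp [smul_eq_mul]; ring

/-- The operator `X` on `L(η)`, with `X·f_i = f_{i+1}` (indices modulo `r`). -/
def wX (r : ℕ) : Module.End ℂ (ZMod r → ℂ) where
  toFun v := fun i => v (i - 1)
  map_add' _ _ := rfl
  map_smul' _ _ := rfl

/-- The operator `Y` on `L(η)`, with `Y·f_i = c_i·f_{i−1}` (indices modulo `r`,
the index of `c` being read off via the canonical representative in `{0, …, r−1}`). -/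
def wY (r : ℕ) (cs : ℕ → ℂ) : Module.End ℂ (ZMod r → ℂ) where
  toFun v := fun j => cs ((j + 1 : ZMod r).val) * v (j + 1)
  map_add' v w := by funext j; simp [mul_add]
  map_smul' a v := by funext j; simp [smul_eq_mul]; ring

private lemma pow_eq_of_mod_eq' {a : ℂ} {r : ℕ} (h : a ^ r = 1) {m n : ℕ} (hmn : m % r = n % r) :
    a ^ m = a ^ n := by
  rw [← Nat.div_add_mod m r, ← Nat.div_add_mod n r, pow_add, pow_add, pow_mul, pow_mul, h,
    one_pow, one_pow, hmn]

private lemma cseq_closed (q γ : ℂ) : ∀ i, (q - 1) * cseq q 1 γ 0 (i + 1) =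
    (q ^ (i + 2) - q) * (1 - γ * q ^ i)
  | 0 => by simp only [cseq]; ring
  | i + 1 => by
    have ih := cseq_closed q γ i
    simp only [cseq] at ih ⊢
    linear_combination q * ih

private lemma wRho_apply {r : ℕ} {Γ : Type*} [CommGroup Γ] (χ₁ η : Γ →* ℂˣ) (h : Γ)
    (v : ZMod r → ℂ) (j : ZMod r) :
    wRho r χ₁ η h v j = (η h : ℂ) * (χ₁ h : ℂ) ^ j.val * v j := rfl

private lemma wX_apply {r : ℕ} (v : ZMod r → ℂ) (j : ZMod r) : wX r v j = v (j - 1) := rfl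

private lemma wY_apply {r : ℕ} (cs : ℕ → ℂ) (v : ZMod r → ℂ) (j : ZMod r) :
    wY r cs v j = cs ((j + 1 : ZMod r).val) * v (j + 1) := rfl

/-- Case (V), construction: for a character `η` of `Γ` with `η|_Λ = ξ`, the space
`L(η) = (ℤ/rℤ → ℂ)` with `ρ(h)·f_i = η(h)·χ₁(h)^i·f_i`, `X·f_i = f_{i+1}` and
`Y·f_i = c_i·f_{i−1}` (indices modulo `r`) is a case-V representation, and it is
irreducible. Here `c_i = cseq q 1 (η(g₁g₂)) 0 i`, i.e. `c₀ = 0` and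
`c_i = q(c_{i−1} + 1 − q^{2(i−1)}η(g₁g₂))`. -/
theorem caseV_construction {Γ : Type*} [CommGroup Γ] [Fintype Γ] (g₁ g₂ : Γ)
    (χ₁ χ₂ : Γ →* ℂˣ) (hχ₂ : χ₂ = χ₁⁻¹) (h12 : χ₁ g₂ * χ₂ g₁ = 1)
    (r : ℕ) (hr : 1 < r) (hord : orderOf χ₁ = r)
    (hq : IsPrimitiveRoot ((χ₁ g₁ : ℂˣ) : ℂ) r)
    (Λ : Subgroup Γ) (hΛ : ∀ g : Γ, g ∈ Λ ↔ (χ₁ g = 1 ∧ χ₂ g = 1)) (ξ : ↥Λ →* ℂˣ)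
    (η : Γ →* ℂˣ) (hη : ∀ g : Λ, η (g : Γ) = ξ g) :
    IsRepV g₁ g₂ χ₁ χ₂ Λ ξ r (wRho r χ₁ η) (wX r)
        (wY r (cseq ((χ₁ g₁ : ℂˣ) : ℂ) 1 ((η (g₁ * g₂) : ℂˣ) : ℂ) 0)) ∧
      Irred2 (wRho r χ₁ η) (wX r)
        (wY r (cseq ((χ₁ g₁ : ℂˣ) : ℂ) 1 ((η (g₁ * g₂) : ℂˣ) : ℂ) 0)) := by
  haveI : NeZero r := ⟨by omega⟩
  haveI : Fact (1 < r) := ⟨hr⟩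
  set q : ℂ := ((χ₁ g₁ : ℂˣ) : ℂ) with hqdef
  set γ : ℂ := ((η (g₁ * g₂) : ℂˣ) : ℂ) with hγdef
  set cs : ℕ → ℂ := cseq q 1 γ 0 with hcsdef
  have hq0 : q ≠ 0 := Units.ne_zero _
  have hq1 : q ≠ 1 := hq.ne_one hr
  have hqr : q ^ r = 1 := hq.pow_eq_one
  have hchi_r : ∀ h : Γ, ((χ₁ h : ℂˣ) : ℂ) ^ r = 1 := by
    intro h
    have h1 : χ₁ ^ r = 1 := by rw [← hord]; exact pow_orderOf_eq_one χ₁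
    have h2 : (χ₁ h) ^ r = 1 := by
      have := congrArg (fun f : Γ →* ℂˣ => f h) h1
      simpa using this
    rw [← Units.val_pow_eq_pow_val, h2, Units.val_one]
  have hval1 : (1 : ZMod r).val = 1 := ZMod.val_one r
  have hmod : ∀ j : ZMod r, (j + 1).val = (j.val + 1) % r := by
    intro j; rw [ZMod.val_add, hval1]
  have hvlt : ∀ j : ZMod r, j.val < r := fun j => ZMod.val_lt j
  have hcsr : cs r = 0 := by
    have h1 := cseq_closed q γ (r - 1)
    have h2 : r - 1 + 1 = r := by omega
    have h3 : q ^ (r - 1 + 2) = q := by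
      rw [show r - 1 + 2 = r + 1 by omega, pow_succ, hqr, one_mul]
    rw [h2, h3, sub_self, zero_mul] at h1
    exact (mul_eq_zero.mp h1).resolve_left (sub_ne_zero.mpr hq1)
  have hrec : ∀ j : ZMod r,
      cs j.val = q⁻¹ * cs ((j + 1).val) + γ * (q ^ j.val * q ^ j.val) - 1 := by
    intro j
    by_cases hj : j.val + 1 < r
    · rw [hmod j, Nat.mod_eq_of_lt hj]
      have e : cs (j.val + 1) = q * (cs j.val + 1 - 1 * (q ^ j.val * q ^ j.val) * γ) := by
        show cseq q 1 γ 0 (j.val + 1) = _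
        simp only [cseq]
        rw [two_mul, pow_add]
      rw [e]
      field_simp
      ring
    · have hj1 : j.val = r - 1 := by have := hvlt j; omega
      have hj2 : (j + 1).val = 0 := by
        rw [hmod j, hj1, show r - 1 + 1 = r by omega, Nat.mod_self]
      have e : cs (r - 1 + 1) = q * (cs (r - 1) + 1 - 1 * (q ^ (r - 1) * q ^ (r - 1)) * γ) := by
        show cseq q 1 γ 0 (r - 1 + 1) = _
        simp only [cseq]
        rw [two_mul, pow_add]
      rw [show r - 1 + 1 = r by omega, hcsr] at e
      have e2 : cs (r - 1) + 1 - 1 * (q ^ (r - 1) * q ^ (r - 1)) * γ = 0 :=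
        (mul_eq_zero.mp e.symm).resolve_left hq0
      rw [hj2, hj1]
      have hcs0 : cs 0 = 0 := rfl
      rw [hcs0]
      linear_combination e2
  have hXpow : ∀ (n : ℕ) (v : ZMod r → ℂ) (j : ZMod r), ((wX r) ^ n) v j = v (j - n) := by
    intro n
    induction n with
    | zero => intro v j; simp
    | succ n ih =>
      intro v j
      rw [pow_succ, Module.End.mul_apply, ih, wX_apply]
      congr 1
      push_cast
      ring
  have hX : (wX r) ^ r = 1 := by
    apply LinearMap.ext; intro v
    funext j
    rw [hXpow, Module.End.one_apply, ZMod.natCast_self, sub_zero]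
  have hYpow : ∀ (n : ℕ) (v : ZMod r → ℂ) (j : ZMod r),
      ((wY r cs) ^ n) v j
        = (∏ k ∈ Finset.range n, cs ((j + (k : ZMod r) + 1).val)) * v (j + (n : ZMod r)) := by
    intro n
    induction n with
    | zero => intro v j; simp
    | succ n ih =>
      intro v j
      rw [pow_succ, Module.End.mul_apply, ih, wY_apply, Finset.prod_range_succ,
        Nat.cast_add, Nat.cast_one, ← add_assoc]
      ring
  have hY : (wY r cs) ^ r = 0 := by
    apply LinearMap.ext; intro v
    funext j
    rw [hYpow, LinearMap.zero_apply, Pi.zero_apply]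
    have hk : (-j - 1).val ∈ Finset.range r := Finset.mem_range.mpr (hvlt _)
    have h0 : cs ((j + (((-j - 1).val : ℕ) : ZMod r) + 1).val) = 0 := by
      have e : (j + (((-j - 1).val : ℕ) : ZMod r) + 1) = 0 := by
        rw [ZMod.natCast_rightInverse (-j - 1)]; ring
      rw [e, ZMod.val_zero]
      rfl
    rw [Finset.prod_eq_zero hk h0, zero_mul]
  have hRpow : ∀ (n : ℕ) (v : ZMod r → ℂ) (j : ZMod r),
      ((wRho r χ₁ η g₁) ^ n) v j = ((η g₁ : ℂ)) ^ n * q ^ (n * j.val) * v j := by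
    intro n
    induction n with
    | zero => intro v j; simp
    | succ n ih =>
      intro v j
      rw [pow_succ, Module.End.mul_apply, ih, wRho_apply, ← hqdef]
      rw [pow_succ, add_mul, one_mul, pow_add]
      ring
  constructor
  · refine ⟨⟨?_, ?_, ?_, ?_, ?_⟩, hX, hY, ?_⟩
    · intro a b
      apply LinearMap.ext; intro v
      funext j
      rw [Module.End.mul_apply, wRho_apply, wRho_apply, wRho_apply, map_mul, map_mul,
        Units.val_mul, Units.val_mul, mul_pow]
      ring
    · apply LinearMap.ext; intro v
      funext j
      rw [wRho_apply, Module.End.one_apply]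
      simp
    · intro h
      apply LinearMap.ext; intro v
      funext j
      rw [Module.End.mul_apply, LinearMap.smul_apply, Pi.smul_apply, Module.End.mul_apply,
        wRho_apply, wX_apply, wX_apply, wRho_apply, smul_eq_mul]
      have hmm : j.val % r = ((j - 1).val + 1) % r := by
        have h1 : (j - 1 + 1).val = ((j - 1).val + 1) % r := hmod (j - 1)
        have e : j - 1 + 1 = j := by ring
        rw [e] at h1
        rw [← h1, Nat.mod_eq_of_lt (hvlt j)]
      rw [pow_eq_of_mod_eq' (hchi_r h) hmm, pow_succ]
      ring
    · intro h
      apply LinearMap.ext; intro v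
      funext j
      rw [Module.End.mul_apply, LinearMap.smul_apply, Pi.smul_apply, Module.End.mul_apply,
        wRho_apply, wY_apply, wY_apply, wRho_apply, smul_eq_mul]
      have hmm : (j + 1).val % r = (j.val + 1) % r := by
        rw [Nat.mod_eq_of_lt (hvlt (j + 1)), hmod j]
      have hne : ((χ₁ h : ℂˣ) : ℂ) ≠ 0 := Units.ne_zero _
      rw [hχ₂, MonoidHom.inv_apply, Units.val_inv_eq_inv_val,
        pow_eq_of_mod_eq' (hchi_r h) hmm, pow_succ]
      field_simp
    · intro g
      apply LinearMap.ext; intro v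
      funext j
      have h1 : χ₁ (g : Γ) = 1 := ((hΛ g).mp g.2).1
      rw [wRho_apply, LinearMap.smul_apply, Module.End.one_apply, Pi.smul_apply, smul_eq_mul,
        hη g, h1]
      simp
    · apply LinearMap.ext; intro v
      funext j
      have hc2 : ((χ₁ g₂ : ℂˣ) : ℂ) = q := by
        have h' : χ₁ g₂ = χ₁ g₁ := by
          have h'' := h12
          rw [hχ₂, MonoidHom.inv_apply, mul_inv_eq_one] at h''
          exact h''
        rw [h', ← hqdef]
      rw [Module.End.mul_apply, LinearMap.sub_apply, LinearMap.add_apply, LinearMap.smul_apply,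
        Module.End.one_apply, Pi.sub_apply, Pi.add_apply, Pi.smul_apply, Module.End.mul_apply,
        smul_eq_mul, wX_apply, wY_apply, wY_apply, wX_apply, wRho_apply, ← hγdef,
        map_mul, Units.val_mul, hc2, ← hqdef, mul_pow]
      have e1 : j - 1 + 1 = j := by ring
      have e2 : j + 1 - 1 = j := by ring
      rw [e1, e2]
      linear_combination (v j) * hrec j
  · constructor
    · refine ⟨fun _ => 1, ?_⟩
      intro h0
      have := congrFun h0 0
      simp at this
    · intro W hW
      rcases hW with ⟨hXW, hYW, hRW⟩
      by_cases hbot : W = ⊥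
      · exact Or.inl hbot
      right
      obtain ⟨v, hvW, hv0⟩ := (Submodule.ne_bot_iff W).mp hbot
      obtain ⟨i, hvi⟩ : ∃ i, v i ≠ 0 := by
        by_contra hc
        push_neg at hc
        exact hv0 (funext hc)
      have hr0 : (r : ℂ) ≠ 0 := Nat.cast_ne_zero.mpr (by omega)
      have hη0 : ((η g₁ : ℂˣ) : ℂ) ≠ 0 := Units.ne_zero _
      have hmemρ : ∀ k : ℕ, ((wRho r χ₁ η g₁) ^ k) v ∈ W := by
        intro k
        induction k with
        | zero => simpa using hvW
        | succ k ih =>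
          rw [pow_succ', Module.End.mul_apply]
          exact hRW g₁ _ ih
      set s : ZMod r → ℂ :=
        ∑ k ∈ Finset.range r,
          (((η g₁ : ℂ))⁻¹ ^ k * ((q ^ i.val)⁻¹) ^ k) • ((wRho r χ₁ η g₁) ^ k) v with hs
      have hsW : s ∈ W := Submodule.sum_mem W fun k _ => Submodule.smul_mem W _ (hmemρ k)
      have hsval : ∀ j, s j = (∑ k ∈ Finset.range r, (q ^ j.val * (q ^ i.val)⁻¹) ^ k) * v j := by
        intro j
        rw [hs, Finset.sum_apply, Finset.sum_mul]
        apply Finset.sum_congr rfl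
        intro k _
        rw [Pi.smul_apply, hRpow, smul_eq_mul, mul_pow, mul_comm k j.val, pow_mul, inv_pow,
          inv_pow]
        field_simp
      have hsingle : Pi.single i (1 : ℂ) ∈ W := by
        have hsi : Pi.single i (1 : ℂ) = ((r : ℂ) * v i)⁻¹ • s := by
          funext j
          rw [Pi.smul_apply, smul_eq_mul, hsval j]
          by_cases hji : j = i
          · subst hji
            rw [mul_inv_cancel₀ (pow_ne_zero _ hq0)]
            simp only [one_pow, Finset.sum_const, Finset.card_range, nsmul_eq_mul, mul_one]
            rw [Pi.single_eq_same, inv_mul_cancel₀ (mul_ne_zero hr0 hvi)]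
          · have hz : q ^ j.val * (q ^ i.val)⁻¹ ≠ 1 := by
              intro hcon
              apply hji
              have hv : q ^ j.val = q ^ i.val :=
                (mul_inv_eq_one₀ (pow_ne_zero i.val hq0)).mp hcon
              have hv2 : j.val = i.val := hq.pow_inj (hvlt j) (hvlt i) hv
              calc j = ((j.val : ℕ) : ZMod r) := (ZMod.natCast_rightInverse j).symm
                _ = ((i.val : ℕ) : ZMod r) := by rw [hv2]
                _ = i := ZMod.natCast_rightInverse i
            have hzr : (q ^ j.val * (q ^ i.val)⁻¹) ^ r = 1 := by
              rw [mul_pow, inv_pow, ← pow_mul, ← pow_mul, mul_comm j.val r, mul_comm i.val r,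
                pow_mul, pow_mul, hqr, one_pow, one_pow, inv_one, mul_one]
            rw [geom_sum_eq hz, hzr, sub_self, zero_div, zero_mul, mul_zero,
              Pi.single_eq_of_ne hji]
        rw [hsi]
        exact Submodule.smul_mem W _ hsW
      have hXsingle : ∀ m : ZMod r, wX r (Pi.single m (1 : ℂ)) = Pi.single (m + 1) (1 : ℂ) := by
        intro m
        funext j
        rw [wX_apply]
        rcases eq_or_ne j (m + 1) with he | he
        · subst he
          rw [add_sub_cancel_right, Pi.single_eq_same, Pi.single_eq_same]
        · rw [Pi.single_eq_of_ne he,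
            Pi.single_eq_of_ne (fun hc => he (by rw [← hc]; ring))]
      have hiter : ∀ n : ℕ, Pi.single (i + (n : ZMod r)) (1 : ℂ) ∈ W := by
        intro n
        induction n with
        | zero => simpa using hsingle
        | succ n ih =>
          have hmem := hXW _ ih
          rw [hXsingle] at hmem
          have e : i + ((n + 1 : ℕ) : ZMod r) = i + (n : ZMod r) + 1 := by push_cast; ring
          rw [e]
          exact hmem
      have hall : ∀ m : ZMod r, Pi.single m (1 : ℂ) ∈ W := by
        intro m
        have hmem := hiter (m - i).val
        have e : i + (m - i) = m := by ring
        rwa [ZMod.natCast_rightInverse (m - i), e] at hmem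
      apply eq_top_iff.mpr
      intro u _
      have hu : u = ∑ m : ZMod r, u m • (Pi.single m (1 : ℂ) : ZMod r → ℂ) := by
        conv_lhs => rw [← Finset.univ_sum_single u]
        apply Finset.sum_congr rfl
        intro m _
        funext j
        simp only [Pi.smul_apply, smul_eq_mul, Pi.single_apply]
        split_ifs <;> simp
      rw [hu]
      exact Submodule.sum_mem W fun m _ => Submodule.smul_mem W _ (hall m)
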